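/- Let B = k[x_1,…,x_n,y_1,…,y_m,z] with the action of the group G_2 = {z ↦ az+b, a ≠ 0} given by ψ_{(a,b)}: x_i ↦ x_i, y_j ↦ a y_j, z ↦ z + b y_1. Then B^{G_2} = k[x_1,…,x_n], and with A = A_{n,m} one has A^{G_2} = k. In particular B^{G_2} has transcendence degree n over A^{G_2} = k. -/

import Mathlib

/-!
An invariant `p` is fixed by `y ↦ a y` for infinitely many `a`; viewed as a polynomial in
`a` this scaling is then constant, so `p = p|_{y=0}`. Substituting `y_1 ↦ z, z ↦ 0` in
`p(x, z + y_1) = p(x, z)` then gives `p = p(x, 0)`.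
For `A`: the substitution `y ↦ 0, z ↦ -x_i` kills `x_i^2 + x_i z` and `x_i^3 + x_i^2 z`, so on
`A` it agrees with the one that moreover sets `x_i ↦ 0`. Hence an element of `A ∩ k[x]` depends
on none of the `x_i`.
-/

open MvPolynomial

/-- The variables of `B_{n,m} = k[x_1,…,x_n,y_1,…,y_m,z]`. -/
abbrev BonnetVars (n m : ℕ) := Fin n ⊕ Fin m ⊕ Unit

variable (k : Type*) [Field k] (n m : ℕ)

/-- The variable `x_i`. -/
noncomputable def Xv (i : Fin n) : MvPolynomial (BonnetVars n m) k := X (Sum.inl i)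
/-- The variable `y_j`. -/
noncomputable def Yv (j : Fin m) : MvPolynomial (BonnetVars n m) k := X (Sum.inr (Sum.inl j))
/-- The variable `z`. -/
noncomputable def Zv : MvPolynomial (BonnetVars n m) k := X (Sum.inr (Sum.inr ()))

/-- The generators of the subalgebra `A_{n,m}`: the `y_j`, `z`, the polynomials
`x_i^2 + x_i z` and `x_i^3 + x_i^2 z`, and the monomials `x_1^{i_1}⋯x_n^{i_n} y_j`
with all `i_k ≤ 1`. -/
noncomputable def AnmGens : Set (MvPolynomial (BonnetVars n m) k) :=
  Set.range (Yv k n m) ∪ {Zv k n m}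
    ∪ Set.range (fun i => Xv k n m i ^ 2 + Xv k n m i * Zv k n m)
    ∪ Set.range (fun i => Xv k n m i ^ 3 + Xv k n m i ^ 2 * Zv k n m)
    ∪ {p | ∃ (s : Finset (Fin n)) (j : Fin m), p = (∏ i ∈ s, Xv k n m i) * Yv k n m j}

/-- The subalgebra `A_{n,m}` of `B_{n,m}`. -/
noncomputable def Anm : Subalgebra k (MvPolynomial (BonnetVars n m) k) :=
  Algebra.adjoin k (AnmGens k n m)

/-- The action of `G₂ = {z ↦ az + b, a ≠ 0}` on `B_{n,m}`: `x_i ↦ x_i`,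
`y_j ↦ a y_j`, `z ↦ z + b y_1` (assuming `m ≥ 1`). -/
noncomputable def psiG2 (hm : 0 < m) (a b : k) :
    MvPolynomial (BonnetVars n m) k →ₐ[k] MvPolynomial (BonnetVars n m) k :=
  MvPolynomial.aeval (fun w => match w with
    | Sum.inl i => Xv k n m i
    | Sum.inr (Sum.inl j) => MvPolynomial.C a * Yv k n m j
    | Sum.inr (Sum.inr _) => Zv k n m + MvPolynomial.C b * Yv k n m ⟨0, hm⟩)

namespace MvPolynomial

variable {R S σ : Type*} [CommSemiring R] [CommSemiring S] [Algebra R S]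

theorem aeval_eq_of_mem_supported {s : Set σ} {f g : σ → S} (hfg : Set.EqOn f g s)
    {p : MvPolynomial σ R} (hp : p ∈ supported R s) : aeval f p = aeval g p := by
  rw [supported_eq_adjoin_X] at hp
  exact AlgHom.adjoin_le_equalizer (aeval f) (aeval g)
    (by rintro _ ⟨w, hw, rfl⟩; simpa using hfg hw) hp

theorem aeval_mem_supported {s : Set σ} {f : σ → MvPolynomial σ R}
    (hf : ∀ w, f w ∈ supported R s) (p : MvPolynomial σ R) : aeval f p ∈ supported R s := by
  have : (aeval f).range ≤ supported R s := by
    rw [aeval_range, Algebra.adjoin_le_iff]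
    rintro _ ⟨w, rfl⟩
    exact hf w
  exact this ⟨p, rfl⟩

theorem polynomial_eval_aeval (f : σ → Polynomial S) (t : S) (p : MvPolynomial σ R) :
    (aeval f p).eval t = aeval (fun w => (f w).eval t) p := by
  simpa using comp_aeval_apply f ((Polynomial.aeval t).restrictScalars R) p

theorem eq_C_of_forall_aeval_update_zero [Fintype σ] [DecidableEq σ] {p : MvPolynomial σ R}
    (h : ∀ w, aeval (Function.update X w 0) p = p) : p = C (constantCoeff p) := by
  have kill : ∀ s : Finset σ, aeval (fun w => if w ∈ s then 0 else X w) p = p := by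
    intro s
    induction s using Finset.induction_on with
    | empty => simp
    | insert a s ha ih =>
      calc aeval (fun w => if w ∈ insert a s then 0 else X w) p
          = aeval (Function.update X a 0) (aeval (fun w => if w ∈ s then 0 else X w) p) := by
            rw [comp_aeval_apply]
            congr 2
            funext w
            by_cases hw : w = a
            · subst hw; simp [ha]
            · by_cases hws : w ∈ s <;> simp [hw, hws]
        _ = p := by rw [ih, h]
  have := kill Finset.univ
  simp only [Finset.mem_univ, ite_true] at this
  exact this.symm.trans (aeval_zero' p)

theorem isTranscendenceBasis_supported_range {R ι σ : Type*} [CommRing R] [Nontrivial R]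
    {f : ι → σ} (hf : Function.Injective f) :
    IsTranscendenceBasis R (fun i => ⟨X (f i), X_mem_supported.2 ⟨i, rfl⟩⟩ :
      ι → supported R (Set.range f)) := by
  let e : MvPolynomial ι R ≃ₐ[R] supported R (Set.range f) :=
    (renameEquiv R (Equiv.ofInjective f hf)).trans (supportedEquivMvPolynomial _).symm
  convert e.isTranscendenceBasis (IsTranscendenceBasis.mvPolynomial ι R) with i
  ext1
  simp [e]

end MvPolynomial

section Bonnet

variable {k n m}

variable (n m) in
abbrev xVars : Set (BonnetVars n m) := Set.range Sum.inl

theorem psiG2_apply_of_mem_supported (hm : 0 < m) (a b : k) {p : MvPolynomial (BonnetVars n m) k}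
    (hp : p ∈ supported k (xVars n m)) : psiG2 k n m hm a b p = p := by
  refine (aeval_eq_of_mem_supported ?_ hp).trans (aeval_X_left_apply p)
  rintro _ ⟨i, rfl⟩
  rfl

variable (k n m) in
noncomputable def killY :
    MvPolynomial (BonnetVars n m) k →ₐ[k] MvPolynomial (BonnetVars n m) k :=
  aeval fun w => match w with
    | Sum.inl i => Xv k n m i
    | Sum.inr (Sum.inl _) => 0
    | Sum.inr (Sum.inr _) => Zv k n m

variable (k n m) in
/-- The scalings `y_j ↦ a y_j`, with `a` replaced by a polynomial variable. -/
noncomputable def scaleY :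
    MvPolynomial (BonnetVars n m) k →ₐ[k] Polynomial (MvPolynomial (BonnetVars n m) k) :=
  aeval fun w => match w with
    | Sum.inl i => Polynomial.C (Xv k n m i)
    | Sum.inr (Sum.inl j) => Polynomial.C (Yv k n m j) * Polynomial.X
    | Sum.inr (Sum.inr _) => Polynomial.C (Zv k n m)

theorem eval_C_scaleY (hm : 0 < m) (a : k) (p : MvPolynomial (BonnetVars n m) k) :
    (scaleY k n m p).eval (C a) = psiG2 k n m hm a 0 p := by
  rw [scaleY, polynomial_eval_aeval, psiG2]
  congr 2
  funext w
  rcases w with i | j | _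
  · simp
  · simp only [Polynomial.eval_mul, Polynomial.eval_C, Polynomial.eval_X]
    ring
  · simp

theorem eval_zero_scaleY (p : MvPolynomial (BonnetVars n m) k) :
    (scaleY k n m p).eval 0 = killY k n m p := by
  rw [scaleY, polynomial_eval_aeval, killY]
  congr 2
  funext w
  rcases w with i | j | _ <;> simp

theorem killY_eq_of_forall_psiG2 [Infinite k] (hm : 0 < m) {p : MvPolynomial (BonnetVars n m) k}
    (hp : ∀ a : k, a ≠ 0 → psiG2 k n m hm a 0 p = p) : killY k n m p = p := by
  have hconst : scaleY k n m p = Polynomial.C p := by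
    apply Polynomial.eq_of_infinite_eval_eq
    refine Set.Infinite.mono ?_ ((Set.finite_singleton (0 : k)).infinite_compl.image
      (C_injective _ _).injOn)
    rintro _ ⟨a, ha, rfl⟩
    simp [eval_C_scaleY hm, hp a ha]
  simpa [hconst] using (eval_zero_scaleY p).symm

variable (k n m) in
noncomputable def yToZ :
    MvPolynomial (BonnetVars n m) k →ₐ[k] MvPolynomial (BonnetVars n m) k :=
  aeval fun w => match w with
    | Sum.inl i => Xv k n m i
    | Sum.inr (Sum.inl _) => Zv k n m
    | Sum.inr (Sum.inr _) => 0

theorem yToZ_comp_psiG2_comp_killY (hm : 0 < m) :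
    (yToZ k n m).comp ((psiG2 k n m hm 1 1).comp (killY k n m)) = killY k n m := by
  ext (i | j | _) : 1 <;> simp [yToZ, psiG2, killY, Xv, Yv, Zv]

theorem mem_supported_of_killY_eq_of_psiG2_eq (hm : 0 < m) {p : MvPolynomial (BonnetVars n m) k}
    (hY : killY k n m p = p) (hψ : psiG2 k n m hm 1 1 p = p) :
    p ∈ supported k (xVars n m) := by
  have hp : p = yToZ k n m (killY k n m p) :=
    calc p = killY k n m p := hY.symm
      _ = yToZ k n m (psiG2 k n m hm 1 1 (killY k n m p)) :=
        (AlgHom.congr_fun (yToZ_comp_psiG2_comp_killY hm) p).symm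
      _ = yToZ k n m (killY k n m p) := by rw [hY, hψ]
  rw [hp, killY, comp_aeval_apply]
  refine aeval_mem_supported (fun w => ?_) p
  rcases w with i | j | _ <;> simp [yToZ, Xv, Zv, X_mem_supported]

theorem psiG2_invariant_iff [Infinite k] (hm : 0 < m) (p : MvPolynomial (BonnetVars n m) k) :
    (∀ a b : k, a ≠ 0 → psiG2 k n m hm a b p = p) ↔ p ∈ supported k (xVars n m) :=
  ⟨fun h => mem_supported_of_killY_eq_of_psiG2_eq hm
      (killY_eq_of_forall_psiG2 hm fun a ha => h a 0 ha) (h 1 1 one_ne_zero),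
    fun hp a b _ => psiG2_apply_of_mem_supported hm a b hp⟩

variable (k n m) in
noncomputable def collapse (i : Fin n) (v : MvPolynomial (BonnetVars n m) k) :
    MvPolynomial (BonnetVars n m) k →ₐ[k] MvPolynomial (BonnetVars n m) k :=
  aeval fun w => match w with
    | Sum.inl l => if l = i then v else Xv k n m l
    | Sum.inr (Sum.inl _) => 0
    | Sum.inr (Sum.inr _) => -Xv k n m i

-- Both send `x_i^2 + x_i z` and `x_i^3 + x_i^2 z` to `0`.
theorem collapse_X_eqOn_Anm (i : Fin n) :
    Set.EqOn (collapse k n m i (Xv k n m i)) (collapse k n m i 0) (Anm k n m) := by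
  refine AlgHom.adjoin_le_equalizer _ _ ?_
  rintro _ ((((⟨j, rfl⟩ | rfl) | ⟨l, rfl⟩) | ⟨l, rfl⟩) | ⟨s, j, rfl⟩)
  · simp [collapse, Yv]
  · simp [collapse, Zv]
  · by_cases hl : l = i
    · simp [collapse, Xv, Zv, hl]
      ring
    · simp [collapse, Xv, Zv, hl]
  · by_cases hl : l = i
    · simp [collapse, Xv, Zv, hl]
      ring
    · simp [collapse, Xv, Zv, hl]
  · simp [collapse, Yv]

theorem aeval_update_zero_eq_of_mem_Anm {p : MvPolynomial (BonnetVars n m) k}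
    (hA : p ∈ Anm k n m) (hx : p ∈ supported k (xVars n m)) (w : BonnetVars n m) :
    aeval (Function.update X w 0) p = p := by
  rcases w with i | w
  · calc aeval (Function.update X (Sum.inl i) 0) p = collapse k n m i 0 p := by
          refine aeval_eq_of_mem_supported ?_ hx
          rintro _ ⟨l, rfl⟩
          by_cases hl : l = i <;> simp [Xv, hl]
      _ = collapse k n m i (Xv k n m i) p := (collapse_X_eqOn_Anm i hA).symm
      _ = aeval X p := by
          refine aeval_eq_of_mem_supported ?_ hx
          rintro _ ⟨l, rfl⟩
          by_cases hl : l = i <;> simp [Xv, hl]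
      _ = p := aeval_X_left_apply p
  · refine (aeval_eq_of_mem_supported ?_ hx).trans (aeval_X_left_apply p)
    rintro _ ⟨l, rfl⟩
    simp

theorem eq_C_of_mem_Anm_of_mem_supported {p : MvPolynomial (BonnetVars n m) k}
    (hA : p ∈ Anm k n m) (hx : p ∈ supported k (xVars n m)) :
    ∃ c : k, p = C c :=
  ⟨_, eq_C_of_forall_aeval_update_zero (aeval_update_zero_eq_of_mem_Anm hA hx)⟩

end Bonnet

theorem G2_invariants (hm : 0 < m) [CharZero k] :
    (∀ p : MvPolynomial (BonnetVars n m) k,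
      (∀ a b : k, a ≠ 0 → psiG2 k n m hm a b p = p) ↔
        p ∈ MvPolynomial.supported k (Set.range (Sum.inl : Fin n → BonnetVars n m))) ∧
    (∀ p : MvPolynomial (BonnetVars n m) k,
      (p ∈ Anm k n m ∧ ∀ a b : k, a ≠ 0 → psiG2 k n m hm a b p = p) ↔
        ∃ c : k, p = MvPolynomial.C c) ∧
    ∃ b : Fin n →
        ↥(MvPolynomial.supported k (Set.range (Sum.inl : Fin n → BonnetVars n m))),
      IsTranscendenceBasis k b := by
  refine ⟨psiG2_invariant_iff hm, fun p => ⟨?_, ?_⟩,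
    ⟨_, isTranscendenceBasis_supported_range Sum.inl_injective⟩⟩
  · rintro ⟨hA, hψ⟩
    exact eq_C_of_mem_Anm_of_mem_supported hA ((psiG2_invariant_iff hm p).1 hψ)
  · rintro ⟨c, rfl⟩
    exact ⟨algebraMap_mem (Anm k n m) c, fun a b _ => (psiG2 k n m hm a b).commutes c⟩
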